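/- Let u, v, w be words and let d be a cyclic permutation of u * v. Then there exist words p, q, w', f, h such that: (a) either p is the reduced form of a cyclic permutation of u and q is a cyclic permutation of v, or p is the reduced form of a cyclic permutation of v and q is a cyclic permutation of u; (b) w' is a cyclic permutation of w; (c) f is a cyclic permutation of q * w'; and d * w is a cyclic permutation of p * (h f h⁻¹); moreover, if h is non-empty then p * (h f h⁻¹) equals the concatenation p h f h⁻¹ (i.e., it is already cyclically reduced). -/

import Mathlib

/-- Words over `X ∪ X⁻¹`: elements of the free monoid on `α × Bool`. -/
abbrev Word (α : Type*) := List (α × Bool)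

/-- The formal inverse of a word. -/
def wInv {α : Type*} (w : Word α) : Word α := FreeGroup.invRev w

/-- `u` is a cyclic permutation of `v`. -/
def IsCycPerm {α : Type*} (u v : Word α) : Prop :=
  ∃ a b : Word α, v = a ++ b ∧ u = b ++ a

variable {α : Type*} [DecidableEq α]

/-- A word is reduced if it is fixed by free reduction. -/
def Reduced (w : Word α) : Prop := FreeGroup.reduce w = w

/-- Auxiliary, fuelled computation of the cyclically reduced form of a
reduced word: repeatedly peel off a first letter that is inverse to the
last letter. -/
def cyclicReduceAux : ℕ → Word α → Word α
  | 0, w => w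
  | n + 1, [] => []
  | n + 1, x :: xs =>
      if xs.getLast? = some (x.1, !x.2) then cyclicReduceAux n xs.dropLast
      else x :: xs

/-- The cyclically reduced form `ρ̂(w)` of a word `w`. -/
def cyclicReduce (w : Word α) : Word α :=
  cyclicReduceAux w.length (FreeGroup.reduce w)

/-- The cyclically reduced product `u * v := ρ̂(uv)`. -/
def crp (u v : Word α) : Word α := cyclicReduce (u ++ v)

/-!
In the free group, every cyclic permutation `d` of `u * v` equals a cyclic permutation of the
concatenation `uv`; cutting that rotation inside `v` or inside `u` gives `d = x p₁ x⁻¹ q` with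
`p₁` one factor and `q` a rotation of the other. Hence `dw` is conjugate to `ρ̂(p₁) · g ρ̂(qw) g⁻¹`,
and `g ρ̂(qw) g⁻¹` reduces to a word `h f h⁻¹` with `f` a rotation of `ρ̂(qw)`. Cancelling the letters
of `h` one at a time against the ends of a rotation `p` of `ρ̂(p₁)` either empties `h` or leaves
`p h f h⁻¹` cyclically reduced. Two cyclically reduced words are conjugate exactly when they are
cyclic permutations of each other, and every rotation of `ρ̂(p₁)` is the reduction of a rotation
of `p₁`; this gives the required witnesses with `w' = w`.
-/

open FreeGroup

section

omit [DecidableEq α]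

def invLetter (x : α × Bool) : α × Bool := (x.1, !x.2)

@[simp]
theorem invLetter_invLetter (x : α × Bool) : invLetter (invLetter x) = x := by
  simp [invLetter]

@[simp]
theorem invLetter_inj {a b : α × Bool} : invLetter a = invLetter b ↔ a = b :=
  ⟨fun h => by simpa using congrArg invLetter h, congrArg _⟩

theorem fst_eq_imp_snd_eq_iff {a b : α × Bool} : (a.1 = b.1 → a.2 = b.2) ↔ b ≠ invLetter a := by
  obtain ⟨a₁, a₂⟩ := a
  obtain ⟨b₁, b₂⟩ := b
  cases a₂ <;> cases b₂ <;> simp [invLetter, eq_comm]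

theorem IsCycPerm.refl (w : Word α) : IsCycPerm w w := ⟨[], w, by simp, by simp⟩

theorem IsCycPerm.trans {u v t : Word α} (h₁ : IsCycPerm u v) (h₂ : IsCycPerm v t) :
    IsCycPerm u t := by
  obtain ⟨a, b, rfl, rfl⟩ := h₁
  obtain ⟨c, d, rfl, hv⟩ := h₂
  rcases List.append_eq_append_iff.mp hv with ⟨k, rfl, rfl⟩ | ⟨k, rfl, rfl⟩
  · exact ⟨c ++ a, k, by simp, by simp⟩
  · exact ⟨k, b ++ d, by simp, by simp⟩

theorem mk_cons (x : α × Bool) (w : Word α) : mk (x :: w) = mk [x] * mk w := by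
  rw [mul_mk, List.singleton_append]

theorem mk_wInv (w : Word α) : mk (wInv w) = (mk w)⁻¹ := inv_mk.symm

theorem mk_invLetter (x : α × Bool) : mk [invLetter x] = (mk [x])⁻¹ := by
  rw [inv_mk]; rfl

theorem wInv_cons (x : α × Bool) (w : Word α) : wInv (x :: w) = wInv w ++ [invLetter x] := by
  simp [wInv, invRev, invLetter]

def conjWord (h f : Word α) : Word α := h ++ f ++ wInv h

@[simp]
theorem conjWord_nil (f : Word α) : conjWord [] f = f := by
  simp [conjWord, wInv, invRev]

theorem conjWord_cons (a : α × Bool) (h f : Word α) :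
    conjWord (a :: h) f = a :: conjWord h f ++ [invLetter a] := by
  simp [conjWord, wInv_cons]

theorem mk_conjWord (h f : Word α) : mk (conjWord h f) = mk h * mk f * (mk h)⁻¹ := by
  rw [conjWord, ← mul_mk, ← mul_mk, mk_wInv]

theorem FreeGroup.isCyclicallyReduced_append_iff {L₁ L₂ : Word α} (h₁ : L₁ ≠ []) (h₂ : L₂ ≠ []) :
    IsCyclicallyReduced (L₁ ++ L₂) ↔ IsReduced L₁ ∧ IsReduced L₂ ∧
      (∀ a ∈ L₁.getLast?, ∀ b ∈ L₂.head?, a.1 = b.1 → a.2 = b.2) ∧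
      (∀ a ∈ L₂.getLast?, ∀ b ∈ L₁.head?, a.1 = b.1 → a.2 = b.2) := by
  rw [isCyclicallyReduced_iff, FreeGroup.IsReduced, List.isChain_append,
    List.getLast?_append_of_ne_nil _ h₂, List.head?_append_of_ne_nil _ h₁, and_assoc, and_assoc]
  rfl

theorem FreeGroup.IsCyclicallyReduced.append_comm {L₁ L₂ : Word α}
    (h : IsCyclicallyReduced (L₁ ++ L₂)) : IsCyclicallyReduced (L₂ ++ L₁) := by
  rcases eq_or_ne L₁ [] with rfl | h₁
  · simpa using h
  rcases eq_or_ne L₂ [] with rfl | h₂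
  · simpa using h
  rw [isCyclicallyReduced_append_iff h₁ h₂] at h
  rw [isCyclicallyReduced_append_iff h₂ h₁]
  tauto

theorem IsCycPerm.isCyclicallyReduced {u v : Word α} (h : IsCycPerm u v)
    (hv : IsCyclicallyReduced v) : IsCyclicallyReduced u := by
  obtain ⟨a, b, rfl, rfl⟩ := h
  exact hv.append_comm

theorem not_isCyclicallyReduced_conjWord_cons (a : α × Bool) (h f : Word α) :
    ¬ IsCyclicallyReduced (conjWord (a :: h) f) := by
  intro hc
  have := hc.2 (invLetter a) (by rw [conjWord_cons, List.getLast?_concat]; rfl) a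
    (by rw [conjWord_cons]; rfl)
  simp [invLetter] at this

theorem isReduced_conjWord_cons {ℓ : α × Bool} {h f : Word α} (hx : IsReduced (conjWord h f))
    (hne : conjWord h f ≠ []) (hhead : (conjWord h f).head? ≠ some (invLetter ℓ))
    (hlast : (conjWord h f).getLast? ≠ some ℓ) : IsReduced (conjWord (ℓ :: h) f) := by
  rw [conjWord_cons, FreeGroup.IsReduced, List.cons_append, List.isChain_cons, List.isChain_append,
    List.head?_append_of_ne_nil _ hne]
  refine ⟨?_, hx, List.isChain_singleton _, ?_⟩
  · rintro b hb
    rw [fst_eq_imp_snd_eq_iff]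
    rintro rfl
    exact hhead hb
  · rintro b hb c hc
    obtain rfl : c = invLetter ℓ := by simpa using hc.symm
    rw [fst_eq_imp_snd_eq_iff, Ne, invLetter_inj]
    rintro rfl
    exact hlast hb

theorem exists_conjWord_eq_conj_letter {F h f : Word α} (hF : IsCyclicallyReduced F)
    (hf : IsCycPerm f F) (hred : IsReduced (conjWord h f)) (ℓ : α × Bool) :
    ∃ h' f', IsCycPerm f' F ∧ IsReduced (conjWord h' f') ∧
      mk (conjWord h' f') = mk [ℓ] * mk (conjWord h f) * (mk [ℓ])⁻¹ := by
  -- When `h = []`, a letter cancelling against an end of `f` is absorbed by rotating `f`.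
  by_cases hhead : (conjWord h f).head? = some (invLetter ℓ)
  · rcases h with _ | ⟨a, h⟩
    · obtain ⟨fs, rfl⟩ : ∃ fs, f = invLetter ℓ :: fs := by
        cases f <;> simp_all
      have hf' : IsCycPerm (fs ++ [invLetter ℓ]) F := IsCycPerm.trans ⟨_, _, rfl, rfl⟩ hf
      refine ⟨[], _, hf', by simpa using (hf'.isCyclicallyReduced hF).isReduced, ?_⟩
      rw [conjWord_nil, conjWord_nil, mk_cons (invLetter ℓ) fs, ← mul_mk (L₁ := fs), mk_invLetter]
      group
    · obtain rfl : a = invLetter ℓ := by simpa [conjWord_cons] using hhead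
      refine ⟨h, f, hf, hred.infix ⟨[invLetter ℓ], [ℓ], by simp [conjWord_cons]⟩, ?_⟩
      rw [mk_conjWord, mk_conjWord, mk_cons (invLetter ℓ), mk_invLetter]
      group
  by_cases hlast : (conjWord h f).getLast? = some ℓ
  · rcases h with _ | ⟨a, h⟩
    · obtain ⟨fs, rfl⟩ : ∃ fs, f = fs ++ [ℓ] := by
        rcases f.eq_nil_or_concat' with rfl | ⟨fs, b, rfl⟩ <;> simp_all
      have hf' : IsCycPerm (ℓ :: fs) F := IsCycPerm.trans ⟨_, _, rfl, rfl⟩ hf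
      refine ⟨[], _, hf', by simpa using (hf'.isCyclicallyReduced hF).isReduced, ?_⟩
      rw [conjWord_nil, conjWord_nil, mk_cons ℓ, ← mul_mk (L₂ := [ℓ])]
      group
    · rw [conjWord_cons, List.getLast?_concat, Option.some_inj] at hlast
      simp [conjWord_cons, ← hlast] at hhead
  rcases eq_or_ne (conjWord h f) [] with hnil | hne
  · exact ⟨h, f, hf, hred, by rw [hnil, ← one_eq_mk]; group⟩
  refine ⟨ℓ :: h, f, hf, isReduced_conjWord_cons hred hne hhead hlast, ?_⟩
  rw [mk_conjWord, mk_conjWord, mk_cons ℓ h]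
  group

theorem FreeGroup.IsCyclicallyReduced.exists_conjWord_eq_conj {F : Word α}
    (hF : IsCyclicallyReduced F) (g : FreeGroup α) :
    ∃ h f, IsCycPerm f F ∧ IsReduced (conjWord h f) ∧ mk (conjWord h f) = g * mk F * g⁻¹ := by
  obtain ⟨L, rfl⟩ : ∃ L, mk L = g := Quot.exists_rep g
  induction L with
  | nil => exact ⟨[], F, .refl F, by simpa using hF.isReduced, by rw [← one_eq_mk]; simp⟩
  | cons ℓ L ih =>
    obtain ⟨h, f, hf, hred, hmk⟩ := ih
    obtain ⟨h', f', hf', hred', hmk'⟩ := exists_conjWord_eq_conj_letter hF hf hred ℓ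
    refine ⟨h', f', hf', hred', ?_⟩
    rw [hmk', hmk, mk_cons ℓ L]
    group

theorem exists_isConj_conjWord_tail {P p h f : Word α} {a : α × Bool}
    (hP : IsCyclicallyReduced P) (hp : IsCycPerm p P) (hred : IsReduced (conjWord (a :: h) f))
    (hnot : ¬ IsCyclicallyReduced (p ++ conjWord (a :: h) f)) :
    ∃ p', IsCycPerm p' P ∧ IsConj (mk (p' ++ conjWord h f)) (mk (p ++ conjWord (a :: h) f)) := by
  rcases p.eq_nil_or_concat' with rfl | ⟨p₀, ℓ, rfl⟩
  · refine ⟨[], hp, isConj_iff.mpr ⟨mk [a], ?_⟩⟩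
    rw [List.nil_append, List.nil_append, mk_conjWord, mk_conjWord, mk_cons a h]
    group
  obtain ⟨b, p₁, hb⟩ : ∃ b p₁, p₀ ++ [ℓ] = b :: p₁ := by
    cases p₀ <;> simp
  -- As `p` and `h f h⁻¹` are reduced, `p h f h⁻¹` can only fail to be cyclically reduced at the
  -- junction `ℓ a` or at the wrap-around `a⁻¹ b`.
  by_cases hℓ : a = invLetter ℓ
  · subst hℓ
    refine ⟨ℓ :: p₀, IsCycPerm.trans ⟨_, _, rfl, rfl⟩ hp, isConj_iff.mpr ⟨(mk [ℓ])⁻¹, ?_⟩⟩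
    rw [conjWord_cons, invLetter_invLetter]
    simp only [← mul_mk]
    rw [mk_cons ℓ p₀, mk_cons (invLetter ℓ), mk_invLetter]
    group
  by_cases hba : b = a
  · subst hba
    refine ⟨p₁ ++ [b], IsCycPerm.trans ⟨[b], p₁, hb, rfl⟩ hp, isConj_iff.mpr ⟨mk [b], ?_⟩⟩
    rw [hb, conjWord_cons]
    simp only [← mul_mk]
    rw [mk_cons b p₁, mk_cons b (conjWord h f), mk_invLetter]
    group
  refine absurd ?_ hnot
  rw [FreeGroup.isCyclicallyReduced_append_iff (by simp) (by simp [conjWord_cons])]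
  refine ⟨(hp.isCyclicallyReduced hP).isReduced, hred, ?_, ?_⟩
  · simp only [List.getLast?_concat, conjWord_cons, List.cons_append, List.head?_cons,
      Option.mem_def, Option.some.injEq, forall_eq', fst_eq_imp_snd_eq_iff]
    exact hℓ
  · simp only [hb, conjWord_cons, List.getLast?_concat, List.head?_cons, Option.mem_def,
      Option.some.injEq, forall_eq', fst_eq_imp_snd_eq_iff, invLetter_invLetter]
    exact hba

theorem exists_isConj_nil_or_isCyclicallyReduced {P p h f : Word α} (hP : IsCyclicallyReduced P)
    (hp : IsCycPerm p P) (hred : IsReduced (conjWord h f)) :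
    ∃ p' h', IsCycPerm p' P ∧ IsConj (mk (p' ++ conjWord h' f)) (mk (p ++ conjWord h f)) ∧
      (h' = [] ∨ IsCyclicallyReduced (p' ++ conjWord h' f)) := by
  induction h generalizing p with
  | nil => exact ⟨p, [], hp, .refl _, .inl rfl⟩
  | cons a h ih =>
    by_cases hcyc : IsCyclicallyReduced (p ++ conjWord (a :: h) f)
    · exact ⟨p, a :: h, hp, .refl _, .inr hcyc⟩
    obtain ⟨p', hp', hconj⟩ := exists_isConj_conjWord_tail hP hp hred hcyc
    obtain ⟨p'', h', hp'', hconj', hend⟩ :=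
      ih hp' (hred.infix ⟨[a], [invLetter a], by simp [conjWord_cons]⟩)
    exact ⟨p'', h', hp'', hconj'.trans hconj, hend⟩

end

theorem cyclicReduceAux_eq_reduceCyclically {n : ℕ} {w : Word α} (hw : w.length ≤ n) :
    cyclicReduceAux n w = reduceCyclically w := by
  induction n generalizing w with
  | zero => simp [List.eq_nil_of_length_eq_zero (Nat.le_zero.mp hw), cyclicReduceAux]
  | succ n ih =>
    rcases w with _ | ⟨x, w⟩
    · simp [cyclicReduceAux]
    rcases w.eq_nil_or_concat' with rfl | ⟨w, b, rfl⟩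
    · simp [cyclicReduceAux]
    simp only [cyclicReduceAux, List.getLast?_concat, List.dropLast_concat,
      reduceCyclically.cons_append]
    rw [ih (by simp at hw; omega)]
    congr 1
    simp [Prod.ext_iff]

theorem cyclicReduce_eq_reduceCyclically (w : Word α) :
    cyclicReduce w = reduceCyclically (reduce w) :=
  cyclicReduceAux_eq_reduceCyclically reduce.red.length_le

theorem isCyclicallyReduced_cyclicReduce (w : Word α) : IsCyclicallyReduced (cyclicReduce w) := by
  rw [cyclicReduce_eq_reduceCyclically]
  exact reduceCyclically.isCyclicallyReduced (.of_reduce_eq reduce.idem)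

theorem cyclicReduce_eq_self {w : Word α} (h : IsCyclicallyReduced w) : cyclicReduce w = w := by
  rw [cyclicReduce_eq_reduceCyclically, h.isReduced.reduce_eq]
  rcases w with _ | ⟨a, w⟩
  · simp
  rcases w.eq_nil_or_concat' with rfl | ⟨w, b, rfl⟩
  · simp
  rw [reduceCyclically.cons_append, if_neg, List.cons_append]
  have := (isCyclicallyReduced_cons_append_iff.mp h).2
  grind

theorem exists_reduce_eq_conjWord_cyclicReduce (w : Word α) :
    ∃ t, reduce w = conjWord t (cyclicReduce w) :=
  ⟨_, by rw [cyclicReduce_eq_reduceCyclically, conjWord, wInv,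
    reduceCyclically.conj_conjugator_reduceCyclically]⟩

theorem isConj_mk_cyclicReduce (w : Word α) : IsConj (mk (cyclicReduce w)) (mk w) := by
  obtain ⟨t, ht⟩ := exists_reduce_eq_conjWord_cyclicReduce w
  exact isConj_iff.mpr ⟨mk t, by rw [← reduce.self (L := w), ht, mk_conjWord]⟩

theorem exists_isCycPerm_reduce_eq {u p : Word α} (hp : IsCycPerm p (cyclicReduce u)) :
    ∃ u₀, IsCycPerm u₀ u ∧ reduce u₀ = p := by
  have hp_red : IsReduced p :=
    (hp.isCyclicallyReduced (isCyclicallyReduced_cyclicReduce u)).isReduced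
  obtain ⟨a, b, hab, rfl⟩ := hp
  obtain ⟨t, ht⟩ := exists_reduce_eq_conjWord_cyclicReduce u
  have hred : Red u ((t ++ a) ++ (b ++ wInv t)) := by
    simpa [ht, hab, conjWord] using reduce.red (L := u)
  obtain ⟨u₁, u₂, rfl, h₁, h₂⟩ := Red.to_append_iff.mp hred
  refine ⟨u₂ ++ u₁, ⟨u₁, u₂, rfl, rfl⟩, ?_⟩
  rw [← hp_red.reduce_eq]
  apply reduce.sound
  rw [← mul_mk, Red.exact.mpr ⟨_, h₁, .refl⟩, Red.exact.mpr ⟨_, h₂, .refl⟩]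
  simp only [← mul_mk, mk_wInv]
  group

theorem FreeGroup.IsCyclicallyReduced.isCycPerm_of_isConj {x y : Word α}
    (hx : IsCyclicallyReduced x) (hy : IsCyclicallyReduced y) (hxy : IsConj (mk x) (mk y)) :
    IsCycPerm y x := by
  obtain ⟨g, hg⟩ := isConj_iff.mp hxy
  obtain ⟨h, f, hf, hred, hmk⟩ := hx.exists_conjWord_eq_conj g
  have hy' : conjWord h f = y := by
    rw [← hred.reduce_eq, ← hy.isReduced.reduce_eq]
    exact reduce.sound (hmk.trans hg)
  rcases h with _ | ⟨a, h⟩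
  · simpa [← hy'] using hf
  · exact absurd (hy' ▸ hy) (not_isCyclicallyReduced_conjWord_cons a h f)

theorem exists_twisted_decomposition {d p₁ q : Word α} (w : Word α) (X : FreeGroup α)
    (hd : mk d = X * mk p₁ * X⁻¹ * mk q) :
    ∃ p f h : Word α, (∃ p₀, IsCycPerm p₀ p₁ ∧ p = reduce p₀) ∧ IsCycPerm f (crp q w) ∧
      IsCycPerm (crp d w) (crp p (conjWord h f)) ∧
      (h ≠ [] → crp p (conjWord h f) = p ++ conjWord h f) := by
  obtain ⟨T, hT⟩ := isConj_iff.mp (isConj_mk_cyclicReduce p₁)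
  obtain ⟨S, hS⟩ := isConj_iff.mp (isConj_mk_cyclicReduce (q ++ w))
  obtain ⟨h₀, f, hf, hred, hmk⟩ :=
    (isCyclicallyReduced_cyclicReduce (q ++ w)).exists_conjWord_eq_conj (T⁻¹ * X⁻¹ * S)
  obtain ⟨p, h, hp, hconj, hnil_or⟩ :=
    exists_isConj_nil_or_isCyclicallyReduced (isCyclicallyReduced_cyclicReduce p₁) (.refl _) hred
  obtain ⟨p₀, hp₀, rfl⟩ := exists_isCycPerm_reduce_eq hp
  have hdw : IsConj (mk (cyclicReduce p₁ ++ conjWord h₀ f)) (mk (d ++ w)) := by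
    refine isConj_iff.mpr ⟨X * T, ?_⟩
    rw [← mul_mk, hmk, ← mul_mk, hd, mul_assoc _ (mk q), mul_mk (L₁ := q), ← hT, ← hS]
    group
  refine ⟨reduce p₀, f, h, ⟨p₀, hp₀, rfl⟩, hf, ?_, fun hne => ?_⟩
  · refine (isCyclicallyReduced_cyclicReduce _).isCycPerm_of_isConj
      (isCyclicallyReduced_cyclicReduce _) ?_
    exact (isConj_mk_cyclicReduce _).trans
      (hconj.trans (hdw.trans (isConj_mk_cyclicReduce _).symm))
  · exact cyclicReduce_eq_self (hnil_or.resolve_left hne)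

theorem twisted_associativity (u v w d : Word α) (hd : IsCycPerm d (crp u v)) :
    ∃ p q w' f h : Word α,
      ((∃ u₀ : Word α, IsCycPerm u₀ u ∧ p = FreeGroup.reduce u₀) ∧ IsCycPerm q v ∨
       (∃ v₀ : Word α, IsCycPerm v₀ v ∧ p = FreeGroup.reduce v₀) ∧ IsCycPerm q u) ∧
      IsCycPerm w' w ∧
      IsCycPerm f (crp q w') ∧
      IsCycPerm (crp d w) (crp p (h ++ f ++ wInv h)) ∧
      (h ≠ [] → crp p (h ++ f ++ wInv h) = p ++ h ++ f ++ wInv h) := by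
  obtain ⟨r, ⟨a, b, hab, rfl⟩, hr⟩ := exists_isCycPerm_reduce_eq hd
  have hmk : mk d = mk b * mk a := by rw [← hr, reduce.self, mul_mk]
  rcases List.append_eq_append_iff.mp hab with ⟨k, rfl, rfl⟩ | ⟨k, rfl, rfl⟩
  · obtain ⟨p, f, h, hp, hf, hcyc, hcat⟩ := exists_twisted_decomposition w (mk b)
      (p₁ := u) (q := b ++ k) (by rw [hmk, ← mul_mk, ← mul_mk]; group)
    exact ⟨p, b ++ k, w, f, h, .inl ⟨hp, k, b, rfl, rfl⟩, .refl w, hf, hcyc,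
      fun hne => (hcat hne).trans (by simp [conjWord])⟩
  · obtain ⟨p, f, h, hp, hf, hcyc, hcat⟩ := exists_twisted_decomposition w (mk k)
      (p₁ := v) (q := k ++ a) (by rw [hmk, ← mul_mk, ← mul_mk]; group)
    exact ⟨p, k ++ a, w, f, h, .inr ⟨hp, a, k, rfl, rfl⟩, .refl w, hf, hcyc,
      fun hne => (hcat hne).trans (by simp [conjWord])⟩
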